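/- Consider the discrete-time quantum walk search on the n-dimensional hypercube (N = 2ⁿ vertices, n ≥ 2), with state space the functions ψ : ((Fin n → Bool) × Fin n) → ℂ. Suppose the marked set is M = {i, j} where the binary strings i and j differ exactly in bit 0 (so i and j are adjacent along direction 0). Let φ = a·Σ_{v,c}|v,c⟩ − an·(|i,0⟩ + |j,0⟩), i.e. the state with amplitude −(n−1)a on |i,0⟩ and |j,0⟩ and amplitude a on every other basis state. Then φ is fixed by one step of the search algorithm: U′φ = φ, where U′ = S·(I⊗C)·(Q⊗I). -/

import Mathlib

/-! The query followed by the Grover coin returns the state unchanged: at an unmarked vertex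
the state is uniform over the coin space, which `C` fixes, while at `i` and `j` its coin sum
`-(n-1)a + (n-1)a` vanishes, so `C` negates it and undoes the sign flip of `Q`. The shift then
fixes the state too, since its only non-uniform amplitudes sit on the two darts `(i,0)`, `(j,0)`
of a single edge, which `S` swaps. -/

/-- Discrete-time quantum walk on the `n`-dimensional hypercube.
Vertices are binary strings `v : Fin n → Bool`; basis states are `(v, c)` with coin
direction `c : Fin n`. `flipBit v c` flips bit `c` of `v` (i.e. `v ⊕ e_c`). -/
def HypercubeWalk.flipBit (n : ℕ) (v : Fin n → Bool) (c : Fin n) : Fin n → Bool :=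
  Function.update v c (!(v c))

/-- The shift operator `S`, with `S|v, c⟩ = |v ⊕ e_c, c⟩`. -/
noncomputable def HypercubeWalk.shift (n : ℕ) (ψ : (Fin n → Bool) × Fin n → ℂ) :
    (Fin n → Bool) × Fin n → ℂ :=
  fun e => ψ (HypercubeWalk.flipBit n e.1 e.2, e.2)

/-- The Grover coin `I ⊗ C`, `(Cψ)(v, c) = (2/n) Σ_{c'} ψ(v, c') − ψ(v, c)`. -/
noncomputable def HypercubeWalk.coin (n : ℕ) (ψ : (Fin n → Bool) × Fin n → ℂ) :
    (Fin n → Bool) × Fin n → ℂ :=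
  fun e => (2 / (n : ℂ)) * (∑ c' : Fin n, ψ (e.1, c')) - ψ e

/-- The query `Q ⊗ I`, flipping the sign at marked vertices. -/
noncomputable def HypercubeWalk.query (n : ℕ) (M : Finset (Fin n → Bool))
    (ψ : (Fin n → Bool) × Fin n → ℂ) : (Fin n → Bool) × Fin n → ℂ :=
  fun e => if e.1 ∈ M then -ψ e else ψ e

/-- One step of the search algorithm, `U' = S · (I ⊗ C) · (Q ⊗ I)`. -/
noncomputable def HypercubeWalk.step (n : ℕ) (M : Finset (Fin n → Bool))
    (ψ : (Fin n → Bool) × Fin n → ℂ) : (Fin n → Bool) × Fin n → ℂ :=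
  HypercubeWalk.shift n (HypercubeWalk.coin n (HypercubeWalk.query n M ψ))

theorem Fin.sum_ite_eq_add_sub_one_mul {M : Type*} [CommRing M] (n : ℕ) (c₀ : Fin n) (x a : M) :
    ∑ c : Fin n, (if c = c₀ then x else a) = x + ((n : M) - 1) * a := by
  have hsplit : ∀ c : Fin n, (if c = c₀ then x else a) = a + if c = c₀ then x - a else 0 := by
    intro c; split_ifs <;> ring
  simp only [hsplit, Finset.sum_add_distrib, Finset.sum_ite_eq', Finset.mem_univ, if_true,
    Finset.sum_const, Finset.card_univ, Fintype.card_fin, nsmul_eq_mul]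
  ring

namespace HypercubeWalk

variable {n : ℕ}

theorem flipBit_involutive (c : Fin n) : Function.Involutive (flipBit n · c) := by
  intro v
  ext d
  by_cases h : d = c
  · subst h; simp [flipBit]
  · simp [flipBit, Function.update_of_ne h]

theorem shift_eq_self {ψ : (Fin n → Bool) × Fin n → ℂ}
    (hψ : ∀ v c, ψ (flipBit n v c, c) = ψ (v, c)) : shift n ψ = ψ :=
  funext fun e => hψ e.1 e.2

theorem coin_apply_of_sum_eq_zero {ψ : (Fin n → Bool) × Fin n → ℂ} {v : Fin n → Bool}
    (hv : ∑ c, ψ (v, c) = 0) (c : Fin n) : coin n ψ (v, c) = -ψ (v, c) := by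
  simp [coin, hv]

theorem coin_apply_of_const [NeZero n] {ψ : (Fin n → Bool) × Fin n → ℂ} {v : Fin n → Bool}
    {a : ℂ} (hv : ∀ c, ψ (v, c) = a) (c : Fin n) : coin n ψ (v, c) = a := by
  have hn : (n : ℂ) ≠ 0 := Nat.cast_ne_zero.mpr (NeZero.ne n)
  simp only [coin, hv, Finset.sum_const, Finset.card_univ, Fintype.card_fin, nsmul_eq_mul]
  field_simp
  ring

theorem coin_query_eq_self [NeZero n] {M : Finset (Fin n → Bool)}
    {ψ : (Fin n → Bool) × Fin n → ℂ}
    (h_unmarked : ∀ v ∉ M, ∀ c c', ψ (v, c) = ψ (v, c'))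
    (h_marked : ∀ v ∈ M, ∑ c, ψ (v, c) = 0) :
    coin n (query n M ψ) = ψ := by
  funext ⟨v, c⟩
  by_cases hv : v ∈ M
  · have hsum : ∑ c, query n M ψ (v, c) = 0 := by
      simp [query, hv, h_marked v hv]
    rw [coin_apply_of_sum_eq_zero hsum]
    simp [query, hv]
  · exact coin_apply_of_const (fun c' => by simp [query, hv, h_unmarked v hv c' c]) c

theorem step_eq_self [NeZero n] {M : Finset (Fin n → Bool)} {ψ : (Fin n → Bool) × Fin n → ℂ}
    (h_unmarked : ∀ v ∉ M, ∀ c c', ψ (v, c) = ψ (v, c'))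
    (h_marked : ∀ v ∈ M, ∑ c, ψ (v, c) = 0)
    (h_shift : ∀ v c, ψ (flipBit n v c, c) = ψ (v, c)) :
    step n M ψ = ψ := by
  rw [step, coin_query_eq_self h_unmarked h_marked, shift_eq_self h_shift]

end HypercubeWalk

theorem hypercube_two_adjacent_marked_stationary_general (n : ℕ) [NeZero n]
    (i j : Fin n → Bool) (hij : j = HypercubeWalk.flipBit n i 0) (a : ℂ) :
    HypercubeWalk.step n {i, j}
      (fun e => if (e.1 = i ∨ e.1 = j) ∧ e.2 = 0 then -((n : ℂ) - 1) * a else a)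
    = fun e => if (e.1 = i ∨ e.1 = j) ∧ e.2 = 0 then -((n : ℂ) - 1) * a else a := by
  have hji : HypercubeWalk.flipBit n j 0 = i := hij ▸ HypercubeWalk.flipBit_involutive 0 i
  apply HypercubeWalk.step_eq_self
  · intro v hv c c'
    simp only [Finset.mem_insert, Finset.mem_singleton] at hv
    simp [hv]
  · intro v hv
    simp only [Finset.mem_insert, Finset.mem_singleton] at hv
    simp only [hv, true_and, Fin.sum_ite_eq_add_sub_one_mul]
    ring
  · rintro v c
    by_cases hc : c = 0
    · subst hc
      simp only [and_true, (HypercubeWalk.flipBit_involutive (0 : Fin n)).eq_iff, hji, ← hij, or_comm]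
    · simp [hc]

/-- For two marked vertices `i` and `j` of the `n`-dimensional hypercube differing
exactly in bit `0`, the state with amplitude `-(n-1)a` on the two darts `|i, 0⟩`,
`|j, 0⟩` of the shared edge and amplitude `a` on every other basis state is fixed by
one step of the search algorithm. -/
theorem hypercube_two_adjacent_marked_stationary (n : ℕ) [NeZero n] (hn : 2 ≤ n)
    (i j : Fin n → Bool) (hij : j = HypercubeWalk.flipBit n i 0) (a : ℂ) :
    HypercubeWalk.step n {i, j}
      (fun e => if (e.1 = i ∨ e.1 = j) ∧ e.2 = 0 then -((n : ℂ) - 1) * a else a)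
    = fun e => if (e.1 = i ∨ e.1 = j) ∧ e.2 = 0 then -((n : ℂ) - 1) * a else a :=
  hypercube_two_adjacent_marked_stationary_general n i j hij a
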